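/- arXiv:2311.08513 — 2 statements merged into one kernel-verified Lean document; each statement's English description precedes it below -/
import Mathlib

section
/- Define h : ℝ → ℝ by h(x) = (3 - 4x)/(3 + 2x). Then for every s ∈ [0,1] and all x ∈ [0,s], h(x)*h(s-x) ≥ h(0)*h(s) (equivalently, the minimum of x ↦ h(x)h(s-x) on [0,s] is attained at the endpoints). -/
theorem stmt_6 (h : ℝ → ℝ) (hh : ∀ x, h x = (3 - 4 * x) / (3 + 2 * x))
    (s : ℝ) (hs : s ∈ Set.Icc (0:ℝ) 1) (x : ℝ) (hx : x ∈ Set.Icc 0 s) :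
    h x * h (s - x) ≥ h 0 * h s := by
  obtain ⟨hs0, hs1⟩ := hs
  obtain ⟨hx0, hxs⟩ := hx
  rw [hh, hh, hh, hh]
  have h1 : (0:ℝ) < 3 + 2 * x := by linarith
  have h2 : (0:ℝ) < 3 + 2 * (s - x) := by linarith
  have h3 : (0:ℝ) < 3 + 2 * s := by linarith
  have h0 : (0:ℝ) < 3 + 2 * 0 := by norm_num
  rw [div_mul_div_comm, div_mul_div_comm, ge_iff_le,
    div_le_div_iff₀ (by positivity) (by positivity)]
  nlinarith [mul_nonneg hx0 (by linarith : (0:ℝ) ≤ s - x), sq_nonneg (s - 2*x),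
    mul_nonneg (mul_nonneg hx0 (by linarith : (0:ℝ) ≤ s - x)) hs0]
end

section
/- (Efron–Stein inequality) Let X_1,...,X_n, X_1',...,X_n' be independent real-valued random variables such that X_i' has the same distribution as X_i for each i, and let f : ℝ^n → ℝ be measurable with f(X) square-integrable. Writing X = (X_1,...,X_n) and X^{(i)} the vector X with coordinate i replaced by X_i', we have Var(f(X)) ≤ (1/2) ∑_{i=1}^n E[(f(X) - f(X^{(i)}))^2]. -/
open MeasureTheory ProbabilityTheory

section Helpers

/-- For a probability measure, `(∫ u)² ≤ ∫ u²`. -/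
lemma sq_integral_le_integral_sq' {α : Type*} [MeasurableSpace α] {m : Measure α}
    [IsProbabilityMeasure m] {u : α → ℝ} (hu : MemLp u 2 m) :
    (∫ a, u a ∂m) ^ 2 ≤ ∫ a, (u a) ^ 2 ∂m := by
  have h := variance_nonneg u m
  rw [variance_eq_sub hu] at h
  have : m[u ^ 2] = ∫ a, (u a) ^ 2 ∂m := by simp [Pi.pow_apply]
  rw [this] at h
  linarith

/-- The product of two L² functions is integrable. -/
lemma memLp_integrable_mul {α : Type*} [MeasurableSpace α] {m : Measure α}
    {u v : α → ℝ} (hu : MemLp u 2 m) (hv : MemLp v 2 m) :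
    Integrable (fun x => u x * v x) m := by
  have hI : Integrable (fun x => ((u x) ^ 2 + (v x) ^ 2) / 2) m :=
    (hu.integrable_sq.add hv.integrable_sq).div_const 2
  refine hI.mono' (hu.aestronglyMeasurable.mul hv.aestronglyMeasurable) ?_
  filter_upwards with x
  have h2 : 2 * |u x| * |v x| ≤ |u x| ^ 2 + |v x| ^ 2 := two_mul_le_add_sq _ _
  have h3 : ‖u x * v x‖ = |u x| * |v x| := by rw [Real.norm_eq_abs, abs_mul]
  rw [h3]
  have hsq : |u x| ^ 2 + |v x| ^ 2 = u x ^ 2 + v x ^ 2 := by rw [sq_abs, sq_abs]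
  linarith

end Helpers

namespace EfronSteinAux

variable {n : ℕ} (ν : Fin n → Measure ℝ) [∀ i, IsProbabilityMeasure (ν i)]

/-- mix: take coordinates in `S` from `x`, the rest from `z`. -/
def mixp (S : Finset (Fin n)) (x z : Fin n → ℝ) : Fin n → ℝ :=
  fun j => if j ∈ S then x j else z j

lemma measurable_mixp (S : Finset (Fin n)) :
    Measurable (fun p : (Fin n → ℝ) × (Fin n → ℝ) => mixp S p.1 p.2) := by
  apply measurable_pi_lambda
  intro j
  by_cases h : j ∈ S <;> simp only [mixp, h, if_true, if_false]
  · exact (measurable_pi_apply j).comp measurable_fst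
  · exact (measurable_pi_apply j).comp measurable_snd

lemma mixp_mixp_self (S : Finset (Fin n)) (x z : Fin n → ℝ) :
    mixp S (mixp S x z) (mixp S z x) = x := by
  funext j; by_cases h : j ∈ S <;> simp [mixp, h]

lemma mixp_mixp (S T : Finset (Fin n)) (x z w : Fin n → ℝ) :
    mixp S (mixp T x z) w = mixp (S ∩ T) x (mixp (S \ T) z w) := by
  funext j
  by_cases hS : j ∈ S <;> by_cases hT : j ∈ T <;>
    simp [mixp, hS, hT, Finset.mem_inter, Finset.mem_sdiff]

/-- the coordinate-swapping permutation of `Fin n ⊕ Fin n`. -/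
def tau (S : Finset (Fin n)) : (Fin n ⊕ Fin n) ≃ (Fin n ⊕ Fin n) where
  toFun := Sum.elim (fun j => if j ∈ S then Sum.inl j else Sum.inr j)
    (fun j => if j ∈ S then Sum.inr j else Sum.inl j)
  invFun := Sum.elim (fun j => if j ∈ S then Sum.inl j else Sum.inr j)
    (fun j => if j ∈ S then Sum.inr j else Sum.inl j)
  left_inv := by rintro (j | j) <;> by_cases h : j ∈ S <;> simp [h]
  right_inv := by rintro (j | j) <;> by_cases h : j ∈ S <;> simp [h]

instance sumElim_prob : ∀ i : Fin n ⊕ Fin n, IsProbabilityMeasure (Sum.elim ν ν i) := by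
  rintro (j | j) <;> simp only [Sum.elim_inl, Sum.elim_inr] <;> infer_instance

lemma tau_pres (S : Finset (Fin n)) :
    MeasurePreserving (fun ω : (Fin n ⊕ Fin n) → ℝ => ω ∘ (tau S))
      (Measure.pi (Sum.elim ν ν)) (Measure.pi (Sum.elim ν ν)) := by
  have hmeas : Measurable (fun ω : (Fin n ⊕ Fin n) → ℝ => ω ∘ (tau S)) :=
    measurable_pi_lambda _ fun i => measurable_pi_apply _
  refine ⟨hmeas, ?_⟩
  haveI : ∀ i : Fin n ⊕ Fin n, SigmaFinite (Sum.elim ν ν i) := fun i => inferInstance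
  refine (Measure.pi_eq fun s hs => ?_).symm
  rw [Measure.map_apply hmeas (MeasurableSet.univ_pi hs)]
  have hpre : (fun ω : (Fin n ⊕ Fin n) → ℝ => ω ∘ (tau S)) ⁻¹' (Set.pi Set.univ s)
      = Set.pi Set.univ (fun i => s ((tau S).symm i)) := by
    ext ω
    simp only [Set.mem_preimage, Set.mem_pi, Set.mem_univ, true_implies, Function.comp_apply]
    constructor
    · intro h i
      have := h ((tau S).symm i)
      rwa [Equiv.apply_symm_apply] at this
    · intro h i
      have := h (tau S i)
      rwa [Equiv.symm_apply_apply] at this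
  rw [hpre, Measure.pi_pi]
  have helim : ∀ i, Sum.elim ν ν ((tau S).symm i) = Sum.elim ν ν i := by
    rintro (j | j) <;> by_cases h : j ∈ S <;> simp [tau, h]
  calc ∏ i, Sum.elim ν ν i (s ((tau S).symm i))
      = ∏ i, Sum.elim ν ν ((tau S).symm i) (s ((tau S).symm i)) := by
        refine Finset.prod_congr rfl fun i _ => by rw [helim]
    _ = ∏ i, Sum.elim ν ν i (s i) := Equiv.prod_comp (tau S).symm fun i => Sum.elim ν ν i (s i)

/-- The swap map on the product of two copies. -/
def Wmap (S : Finset (Fin n)) (p : (Fin n → ℝ) × (Fin n → ℝ)) :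
    (Fin n → ℝ) × (Fin n → ℝ) := (mixp S p.1 p.2, mixp S p.2 p.1)

noncomputable def esum : ((Fin n ⊕ Fin n) → ℝ) ≃ᵐ ((Fin n → ℝ) × (Fin n → ℝ)) :=
  MeasurableEquiv.sumPiEquivProdPi (fun _ : Fin n ⊕ Fin n => ℝ)

lemma esum_pres :
    MeasurePreserving (esum (n := n)) (Measure.pi (Sum.elim ν ν))
      ((Measure.pi ν).prod (Measure.pi ν)) := by
  have := measurePreserving_sumPiEquivProdPi (X := fun _ : Fin n ⊕ Fin n => ℝ) (Sum.elim ν ν)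
  simpa [esum] using this

lemma Wmap_pres (S : Finset (Fin n)) :
    MeasurePreserving (Wmap (n := n) S) ((Measure.pi ν).prod (Measure.pi ν))
      ((Measure.pi ν).prod (Measure.pi ν)) := by
  have h1 := (esum_pres ν).symm esum
  have h2 := (tau_pres ν S).comp h1
  have h3 := (esum_pres ν).comp h2
  have heq : (esum (n := n)) ∘ (fun ω : (Fin n ⊕ Fin n) → ℝ => ω ∘ (tau S))
      ∘ (esum (n := n)).symm = Wmap S := by
    funext p
    apply Prod.ext <;> funext j <;>
      by_cases h : j ∈ S <;>
        simp [esum, Wmap, mixp, tau, h, MeasurableEquiv.sumPiEquivProdPi,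
          Equiv.sumPiEquivProdPi, MeasurableEquiv.coe_mk]
  rw [heq] at h3
  exact h3

lemma measurable_Wmap (S : Finset (Fin n)) : Measurable (Wmap (n := n) S) :=
  Measurable.prod (measurable_mixp S)
    ((measurable_mixp S).comp measurable_swap)

/-- `Wmap` as a measurable equiv (it is an involution). -/
noncomputable def Weq (S : Finset (Fin n)) :
    ((Fin n → ℝ) × (Fin n → ℝ)) ≃ᵐ ((Fin n → ℝ) × (Fin n → ℝ)) where
  toFun := Wmap S
  invFun := Wmap S
  left_inv := fun p => by
    apply Prod.ext <;> simp [Wmap, mixp_mixp_self]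
  right_inv := fun p => by
    apply Prod.ext <;> simp [Wmap, mixp_mixp_self]
  measurable_toFun := measurable_Wmap S
  measurable_invFun := measurable_Wmap S

lemma map_mixp (S : Finset (Fin n)) :
    Measure.map (fun p : (Fin n → ℝ) × (Fin n → ℝ) => mixp S p.1 p.2)
      ((Measure.pi ν).prod (Measure.pi ν)) = Measure.pi ν := by
  have : (fun p : (Fin n → ℝ) × (Fin n → ℝ) => mixp S p.1 p.2)
      = Prod.fst ∘ (Wmap S) := rfl
  rw [this, ← Measure.map_map measurable_fst (Wmap_pres ν S).measurable,
    (Wmap_pres ν S).map_eq, Measure.map_fst_prod]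
  simp

set_option linter.unusedSectionVars false

section Avg

variable (f : (Fin n → ℝ) → ℝ)

/-- averaging operator: freeze coordinates in `S`, integrate out the rest. -/
noncomputable def avg (S : Finset (Fin n)) (h : (Fin n → ℝ) → ℝ) : (Fin n → ℝ) → ℝ :=
  fun x => ∫ z, h (mixp S x z) ∂(Measure.pi ν)

variable {h : (Fin n → ℝ) → ℝ}

lemma memℒp_mix (S : Finset (Fin n)) (hm : Measurable h)
    (h2 : MemLp h 2 (Measure.pi ν)) :
    MemLp (fun p : (Fin n → ℝ) × (Fin n → ℝ) => h (mixp S p.1 p.2)) 2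
      ((Measure.pi ν).prod (Measure.pi ν)) := by
  have haem : AEMeasurable (fun p : (Fin n → ℝ) × (Fin n → ℝ) => mixp S p.1 p.2)
      ((Measure.pi ν).prod (Measure.pi ν)) := (measurable_mixp S).aemeasurable
  have h2' : MemLp h 2 (Measure.map (fun p : (Fin n → ℝ) × (Fin n → ℝ) => mixp S p.1 p.2)
      ((Measure.pi ν).prod (Measure.pi ν))) := by rw [map_mixp]; exact h2
  exact (memLp_map_measure_iff hm.aestronglyMeasurable haem).1 h2'

lemma sm_avg (S : Finset (Fin n)) (hm : Measurable h) :
    StronglyMeasurable (avg ν S h) :=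
  (hm.comp (measurable_mixp S)).stronglyMeasurable.integral_prod_right'

lemma integral_mix (S : Finset (Fin n)) {g : (Fin n → ℝ) → ℝ} (hg : Measurable g) :
    ∫ p, g (mixp S p.1 p.2) ∂((Measure.pi ν).prod (Measure.pi ν))
      = ∫ x, g x ∂(Measure.pi ν) := by
  conv_rhs => rw [← map_mixp ν S]
  rw [integral_map (measurable_mixp S).aemeasurable hg.aestronglyMeasurable]


lemma avg_sq_integrable (S : Finset (Fin n)) (hm : Measurable h)
    (h2 : MemLp h 2 (Measure.pi ν)) :
    Integrable (fun x => (avg ν S h x) ^ 2) (Measure.pi ν)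
      ∧ ∫ x, (avg ν S h x) ^ 2 ∂(Measure.pi ν) ≤ ∫ x, (h x) ^ 2 ∂(Measure.pi ν) := by
  classical
  set π := Measure.pi ν
  set F : (Fin n → ℝ) × (Fin n → ℝ) → ℝ := fun p => h (mixp S p.1 p.2) with hF
  have hF2 : MemLp F 2 (π.prod π) := memℒp_mix ν S hm h2
  have hFsq : Integrable (fun p => (F p) ^ 2) (π.prod π) := hF2.integrable_sq
  have hGint : Integrable (fun x => ∫ z, (F (x, z)) ^ 2 ∂π) π :=
    hFsq.integral_prod_left
  -- a.e. slice bound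
  have hslice : ∀ᵐ x ∂π, (avg ν S h x) ^ 2 ≤ ∫ z, (F (x, z)) ^ 2 ∂π := by
    filter_upwards [hFsq.prod_right_ae] with x hx
    have hsm : StronglyMeasurable (fun z => F (x, z)) :=
      (hm.comp (measurable_mixp S)).stronglyMeasurable.comp_measurable measurable_prodMk_left
    have hmem : MemLp (fun z => F (x, z)) 2 π :=
      (memLp_two_iff_integrable_sq hsm.aestronglyMeasurable).2 hx
    exact sq_integral_le_integral_sq' hmem
  have hbound : ∀ᵐ x ∂π, ‖(avg ν S h x) ^ 2‖ ≤ ∫ z, (F (x, z)) ^ 2 ∂π := by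
    filter_upwards [hslice] with x hx
    rwa [Real.norm_eq_abs, abs_of_nonneg (sq_nonneg _)]
  have hint : Integrable (fun x => (avg ν S h x) ^ 2) π :=
    hGint.mono' ((sm_avg ν S hm).pow 2).aestronglyMeasurable hbound
  refine ⟨hint, ?_⟩
  calc ∫ x, (avg ν S h x) ^ 2 ∂π ≤ ∫ x, (∫ z, (F (x, z)) ^ 2 ∂π) ∂π :=
        integral_mono_ae hint hGint hslice
    _ = ∫ p, (F p) ^ 2 ∂(π.prod π) := (integral_prod _ hFsq).symm
    _ = ∫ x, (h x) ^ 2 ∂π := integral_mix ν S (hm.pow_const 2)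

lemma avg_memℒp (S : Finset (Fin n)) (hm : Measurable h)
    (h2 : MemLp h 2 (Measure.pi ν)) :
    MemLp (avg ν S h) 2 (Measure.pi ν) :=
  (memLp_two_iff_integrable_sq (sm_avg ν S hm).aestronglyMeasurable).2
    (avg_sq_integrable ν S hm h2).1

lemma jensen_avg (S : Finset (Fin n)) (hm : Measurable h)
    (h2 : MemLp h 2 (Measure.pi ν)) :
    ∫ x, (avg ν S h x) ^ 2 ∂(Measure.pi ν) ≤ ∫ x, (h x) ^ 2 ∂(Measure.pi ν) :=
  (avg_sq_integrable ν S hm h2).2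

lemma memℒp_fst {u : (Fin n → ℝ) → ℝ} (hum : Measurable u)
    (hu2 : MemLp u 2 (Measure.pi ν)) :
    MemLp (fun p : (Fin n → ℝ) × (Fin n → ℝ) => u p.1) 2
      ((Measure.pi ν).prod (Measure.pi ν)) := by
  have hmapfst : Measure.map Prod.fst ((Measure.pi ν).prod (Measure.pi ν)) = Measure.pi ν := by
    rw [Measure.map_fst_prod]; simp
  have hu2' : MemLp u 2 (Measure.map (Prod.fst :
      (Fin n → ℝ) × (Fin n → ℝ) → (Fin n → ℝ)) ((Measure.pi ν).prod (Measure.pi ν))) := by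
    rw [hmapfst]; exact hu2
  exact (memLp_map_measure_iff hum.aestronglyMeasurable measurable_fst.aemeasurable).1 hu2'

/-- self-adjointness of the averaging operator. -/
lemma avg_selfadj (S : Finset (Fin n)) {u v : (Fin n → ℝ) → ℝ}
    (hum : Measurable u) (hu2 : MemLp u 2 (Measure.pi ν))
    (hvm : Measurable v) (hv2 : MemLp v 2 (Measure.pi ν)) :
    ∫ x, u x * avg ν S v x ∂(Measure.pi ν)
      = ∫ x, avg ν S u x * v x ∂(Measure.pi ν) := by
  classical
  set π := Measure.pi ν
  set F : (Fin n → ℝ) × (Fin n → ℝ) → ℝ := fun p => u p.1 * v (mixp S p.1 p.2) with hFdef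
  have hFint : Integrable F (π.prod π) :=
    memLp_integrable_mul (memℒp_fst ν hum hu2) (memℒp_mix ν S hvm hv2)
  set G : (Fin n → ℝ) × (Fin n → ℝ) → ℝ := fun p => u (mixp S p.1 p.2) * v p.1 with hGdef
  have hGint : Integrable G (π.prod π) :=
    memLp_integrable_mul (memℒp_mix ν S hum hu2) (memℒp_fst ν hvm hv2)
  have step1 : ∫ x, u x * avg ν S v x ∂π = ∫ p, F p ∂(π.prod π) := by
    rw [integral_prod _ hFint]
    refine integral_congr_ae (Filter.Eventually.of_forall fun x => ?_)
    simpa [avg, hFdef] using (integral_const_mul (u x) fun z => v (mixp S x z)).symm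
  have step4 : ∫ p, G p ∂(π.prod π) = ∫ x, avg ν S u x * v x ∂π := by
    rw [integral_prod _ hGint]
    refine integral_congr_ae (Filter.Eventually.of_forall fun x => ?_)
    simpa [avg, hGdef] using (integral_mul_const (v x) fun z => u (mixp S x z))
  have step3 : ∫ p, F p ∂(π.prod π) = ∫ p, G p ∂(π.prod π) := by
    have hpres : MeasurePreserving (⇑(Weq S)) (π.prod π) (π.prod π) := Wmap_pres ν S
    have hcomp := hpres.integral_comp (Weq S).measurableEmbedding F
    rw [← hcomp]
    refine integral_congr_ae (Filter.Eventually.of_forall fun p => ?_)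
    show F (Wmap S p) = G p
    simp only [hFdef, hGdef, Wmap, mixp_mixp_self]
  rw [step1, step3, step4]



lemma avg_comp (S T : Finset (Fin n)) (hm : Measurable h)
    (h2 : MemLp h 2 (Measure.pi ν)) :
    avg ν T (avg ν S h) =ᵐ[Measure.pi ν] avg ν (S ∩ T) h := by
  classical
  set π := Measure.pi ν
  have hKint : Integrable (fun p : (Fin n → ℝ) × (Fin n → ℝ) => h (mixp (S ∩ T) p.1 p.2))
      (π.prod π) := (memℒp_mix ν (S ∩ T) hm h2).integrable one_le_two
  filter_upwards [hKint.prod_right_ae] with x hx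
  have hx_m : Measurable (fun y => h (mixp (S ∩ T) x y)) :=
    hm.comp ((measurable_mixp (S ∩ T)).comp measurable_prodMk_left)
  have hΦint : Integrable
      (fun p : (Fin n → ℝ) × (Fin n → ℝ) => h (mixp (S ∩ T) x (mixp (S \ T) p.1 p.2)))
      (π.prod π) := by
    have hmem : Integrable (fun y => h (mixp (S ∩ T) x y))
        (Measure.map (fun p : (Fin n → ℝ) × (Fin n → ℝ) => mixp (S \ T) p.1 p.2)
          (π.prod π)) := by
      rw [map_mixp]; exact hx
    exact (integrable_map_measure hx_m.aestronglyMeasurable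
      (measurable_mixp (S \ T)).aemeasurable).1 hmem
  calc avg ν T (avg ν S h) x
      = ∫ z, ∫ w, h (mixp (S ∩ T) x (mixp (S \ T) z w)) ∂π ∂π := by
        refine integral_congr_ae (Filter.Eventually.of_forall fun z => ?_)
        refine integral_congr_ae (Filter.Eventually.of_forall fun w => ?_)
        show h (mixp S (mixp T x z) w) = h (mixp (S ∩ T) x (mixp (S \ T) z w))
        rw [mixp_mixp]
    _ = ∫ p, h (mixp (S ∩ T) x (mixp (S \ T) p.1 p.2)) ∂(π.prod π) :=
        (integral_prod _ hΦint).symm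
    _ = ∫ y, h (mixp (S ∩ T) x y) ∂π := integral_mix ν (S \ T) hx_m
    _ = avg ν (S ∩ T) h x := rfl

lemma avg_univ (hm : Measurable h) : avg ν Finset.univ h = h := by
  funext x
  have : ∀ z, mixp (Finset.univ : Finset (Fin n)) x z = x := fun z => by
    funext j; simp [mixp]
  simp [avg, this]

lemma avg_empty : avg ν (∅ : Finset (Fin n)) h = fun _ => ∫ z, h z ∂(Measure.pi ν) := by
  funext x
  have : ∀ z : Fin n → ℝ, mixp (∅ : Finset (Fin n)) x z = z := fun z => by
    funext j; simp [mixp]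
  simp [avg, this]

end Avg

section QLayer

variable (f : (Fin n → ℝ) → ℝ)

/-- `Qf S = ⟨f, P_S f⟩`. -/
noncomputable def Qf (S : Finset (Fin n)) : ℝ :=
  ∫ x, f x * avg ν S f x ∂(Measure.pi ν)

variable {f}

lemma integral_avg_mul_avg (S T : Finset (Fin n)) (hfm : Measurable f)
    (hf2 : MemLp f 2 (Measure.pi ν)) :
    ∫ x, avg ν S f x * avg ν T f x ∂(Measure.pi ν) = Qf ν f (S ∩ T) := by
  have h1 : ∫ x, avg ν S f x * avg ν T f x ∂(Measure.pi ν)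
      = ∫ x, avg ν T (avg ν S f) x * f x ∂(Measure.pi ν) :=
    avg_selfadj ν T (sm_avg ν S hfm).measurable (avg_memℒp ν S hfm hf2) hfm hf2
  rw [h1]
  have h2 : ∫ x, avg ν T (avg ν S f) x * f x ∂(Measure.pi ν)
      = ∫ x, avg ν (S ∩ T) f x * f x ∂(Measure.pi ν) := by
    refine integral_congr_ae ?_
    exact (avg_comp ν S T hfm hf2).mul (Filter.EventuallyEq.refl _ f)
  rw [h2, Qf]
  refine integral_congr_ae (Filter.Eventually.of_forall fun x => ?_)
  ring

lemma Qf_univ (hfm : Measurable f) :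
    Qf ν f Finset.univ = ∫ x, (f x) ^ 2 ∂(Measure.pi ν) := by
  rw [Qf, avg_univ ν hfm]
  refine integral_congr_ae (Filter.Eventually.of_forall fun x => ?_)
  ring

lemma Qf_empty : Qf ν f ∅ = (∫ x, f x ∂(Measure.pi ν)) ^ 2 := by
  rw [Qf, avg_empty]
  rw [integral_mul_const]
  ring


lemma integral_fst' {g : (Fin n → ℝ) → ℝ} (hg : Measurable g) :
    ∫ p, g p.1 ∂((Measure.pi ν).prod (Measure.pi ν)) = ∫ x, g x ∂(Measure.pi ν) := by
  have hmapfst : Measure.map (Prod.fst : (Fin n → ℝ) × (Fin n → ℝ) → (Fin n → ℝ))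
      ((Measure.pi ν).prod (Measure.pi ν)) = Measure.pi ν := by
    rw [Measure.map_fst_prod]; simp
  conv_rhs => rw [← hmapfst]
  rw [integral_map measurable_fst.aemeasurable hg.aestronglyMeasurable]

lemma integral_cross (C : Finset (Fin n)) (hfm : Measurable f)
    (hf2 : MemLp f 2 (Measure.pi ν)) :
    ∫ p, f p.1 * f (mixp C p.1 p.2) ∂((Measure.pi ν).prod (Measure.pi ν)) = Qf ν f C := by
  have hint : Integrable (fun p : (Fin n → ℝ) × (Fin n → ℝ) => f p.1 * f (mixp C p.1 p.2))
      ((Measure.pi ν).prod (Measure.pi ν)) :=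
    memLp_integrable_mul (memℒp_fst ν hfm hf2) (memℒp_mix ν C hfm hf2)
  rw [integral_prod _ hint, Qf]
  refine integral_congr_ae (Filter.Eventually.of_forall fun x => ?_)
  simp only [avg]
  exact integral_const_mul _ _

/-- identity for the right-hand side terms. -/
lemma rterm_eq (C : Finset (Fin n)) (hfm : Measurable f)
    (hf2 : MemLp f 2 (Measure.pi ν)) :
    ∫ p, (f p.1 - f (mixp C p.1 p.2)) ^ 2 ∂((Measure.pi ν).prod (Measure.pi ν))
      = 2 * (Qf ν f Finset.univ - Qf ν f C) := by
  classical
  set π := Measure.pi ν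
  have hmemfst := memℒp_fst ν hfm hf2
  have hmemmix := memℒp_mix ν C hfm hf2
  have h1 : Integrable (fun p : (Fin n → ℝ) × (Fin n → ℝ) => f p.1 * f p.1) (π.prod π) :=
    memLp_integrable_mul hmemfst hmemfst
  have h2 : Integrable (fun p : (Fin n → ℝ) × (Fin n → ℝ) => f p.1 * f (mixp C p.1 p.2))
      (π.prod π) := memLp_integrable_mul hmemfst hmemmix
  have h3 : Integrable (fun p : (Fin n → ℝ) × (Fin n → ℝ) =>
      f (mixp C p.1 p.2) * f (mixp C p.1 p.2)) (π.prod π) :=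
    memLp_integrable_mul hmemmix hmemmix
  have hexp : ∀ p : (Fin n → ℝ) × (Fin n → ℝ),
      (f p.1 - f (mixp C p.1 p.2)) ^ 2
        = f p.1 * f p.1 - 2 * (f p.1 * f (mixp C p.1 p.2))
          + f (mixp C p.1 p.2) * f (mixp C p.1 p.2) := fun p => by ring
  rw [integral_congr_ae (Filter.Eventually.of_forall hexp)]
  have h12 : Integrable (fun p : (Fin n → ℝ) × (Fin n → ℝ) =>
      f p.1 * f p.1 - 2 * (f p.1 * f (mixp C p.1 p.2))) (π.prod π) := h1.sub (h2.const_mul 2)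
  rw [integral_add h12 h3, integral_sub h1 (h2.const_mul 2), integral_const_mul]
  have e1 : ∫ p, f p.1 * f p.1 ∂(π.prod π) = Qf ν f Finset.univ := by
    have := integral_fst' ν (g := fun x => f x * f x) (hfm.mul hfm)
    rw [this, Qf_univ ν hfm]
    exact integral_congr_ae (Filter.Eventually.of_forall fun x => by ring)
  have e3 : ∫ p, f (mixp C p.1 p.2) * f (mixp C p.1 p.2) ∂(π.prod π)
      = Qf ν f Finset.univ := by
    have := integral_mix ν C (g := fun x => f x * f x) (hfm.mul hfm)
    rw [this, Qf_univ ν hfm]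
    exact integral_congr_ae (Filter.Eventually.of_forall fun x => by ring)
  rw [e1, e3, integral_cross ν C hfm hf2]
  ring

/-- The key one-coordinate inequality. -/
lemma key_step (T C : Finset (Fin n)) (hfm : Measurable f)
    (hf2 : MemLp f 2 (Measure.pi ν)) :
    Qf ν f T - Qf ν f (C ∩ T) ≤ Qf ν f Finset.univ - Qf ν f C := by
  classical
  set π := Measure.pi ν
  set g : (Fin n → ℝ) → ℝ := fun x => f x - avg ν C f x with hgdef
  have hCm : Measurable (avg ν C f) := (sm_avg ν C hfm).measurable
  have hC2 : MemLp (avg ν C f) 2 π := avg_memℒp ν C hfm hf2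
  have hgm : Measurable g := hfm.sub hCm
  have hg2 : MemLp g 2 π := hf2.sub hC2
  -- identify avg T g
  have hTg : avg ν T g =ᵐ[π] fun x => avg ν T f x - avg ν (C ∩ T) f x := by
    have hint1 : Integrable (fun p : (Fin n → ℝ) × (Fin n → ℝ) => f (mixp T p.1 p.2))
        (π.prod π) := (memℒp_mix ν T hfm hf2).integrable one_le_two
    have hint2 : Integrable (fun p : (Fin n → ℝ) × (Fin n → ℝ) => avg ν C f (mixp T p.1 p.2))
        (π.prod π) := (memℒp_mix ν T hCm hC2).integrable one_le_two
    have hcomp := avg_comp ν C T hfm hf2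
    filter_upwards [hint1.prod_right_ae, hint2.prod_right_ae, hcomp] with x h1 h2 h3
    have : avg ν T g x = avg ν T f x - avg ν T (avg ν C f) x := by
      simpa [avg, hgdef] using integral_sub h1 h2
    rw [this, h3]
  have hTgsq : ∫ x, (avg ν T g x) ^ 2 ∂π
      = Qf ν f T - Qf ν f (C ∩ T) := by
    have hrw : ∫ x, (avg ν T g x) ^ 2 ∂π
        = ∫ x, (avg ν T f x - avg ν (C ∩ T) f x) ^ 2 ∂π := by
      refine integral_congr_ae (hTg.mono fun x hx => ?_)
      simp only [hx]
    rw [hrw]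
    have hTm := (sm_avg ν T hfm).measurable
    have hT2 := avg_memℒp ν T hfm hf2
    have hT'm := (sm_avg ν (C ∩ T) hfm).measurable
    have hT'2 := avg_memℒp ν (C ∩ T) hfm hf2
    have i1 : Integrable (fun x => avg ν T f x * avg ν T f x) π :=
      memLp_integrable_mul hT2 hT2
    have i2 : Integrable (fun x => avg ν T f x * avg ν (C ∩ T) f x) π :=
      memLp_integrable_mul hT2 hT'2
    have i3 : Integrable (fun x => avg ν (C ∩ T) f x * avg ν (C ∩ T) f x) π :=
      memLp_integrable_mul hT'2 hT'2
    have hexp : ∀ x, (avg ν T f x - avg ν (C ∩ T) f x) ^ 2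
        = avg ν T f x * avg ν T f x - 2 * (avg ν T f x * avg ν (C ∩ T) f x)
          + avg ν (C ∩ T) f x * avg ν (C ∩ T) f x := fun x => by ring
    rw [integral_congr_ae (Filter.Eventually.of_forall hexp)]
    have i12 : Integrable (fun x => avg ν T f x * avg ν T f x
        - 2 * (avg ν T f x * avg ν (C ∩ T) f x)) π := i1.sub (i2.const_mul 2)
    rw [integral_add i12 i3, integral_sub i1 (i2.const_mul 2), integral_const_mul]
    have e1 := integral_avg_mul_avg ν T T hfm hf2
    have e2 := integral_avg_mul_avg ν T (C ∩ T) hfm hf2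
    have e3 := integral_avg_mul_avg ν (C ∩ T) (C ∩ T) hfm hf2
    rw [Finset.inter_self] at e1 e3
    have hTT' : T ∩ (C ∩ T) = C ∩ T := by
      ext j; simp only [Finset.mem_inter]; tauto
    rw [hTT'] at e2
    rw [e1, e2, e3]
    ring
  have hgsq : ∫ x, (g x) ^ 2 ∂π = Qf ν f Finset.univ - Qf ν f C := by
    have i1 : Integrable (fun x => f x * f x) π := memLp_integrable_mul hf2 hf2
    have i2 : Integrable (fun x => f x * avg ν C f x) π := memLp_integrable_mul hf2 hC2
    have i3 : Integrable (fun x => avg ν C f x * avg ν C f x) π :=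
      memLp_integrable_mul hC2 hC2
    have hexp : ∀ x, (g x) ^ 2
        = f x * f x - 2 * (f x * avg ν C f x) + avg ν C f x * avg ν C f x := fun x => by
      simp only [hgdef]; ring
    rw [integral_congr_ae (Filter.Eventually.of_forall hexp)]
    have i12 : Integrable (fun x => f x * f x - 2 * (f x * avg ν C f x)) π :=
      i1.sub (i2.const_mul 2)
    rw [integral_add i12 i3, integral_sub i1 (i2.const_mul 2), integral_const_mul]
    have e1 : ∫ x, f x * f x ∂π = Qf ν f Finset.univ := by
      rw [Qf_univ ν hfm]
      exact integral_congr_ae (Filter.Eventually.of_forall fun x => by ring)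
    have e3 := integral_avg_mul_avg ν C C hfm hf2
    rw [Finset.inter_self] at e3
    rw [e1, e3]
    have e2 : ∫ x, f x * avg ν C f x ∂π = Qf ν f C := rfl
    rw [e2]
    ring
  have hjen := jensen_avg ν T hgm hg2
  rw [hTgsq, hgsq] at hjen
  exact hjen


/-- Efron–Stein on the product space. -/
theorem core_ineq (hfm : Measurable f) (hf2 : MemLp f 2 (Measure.pi ν)) :
    variance f (Measure.pi ν) ≤ (1/2) * ∑ i : Fin n,
      ∫ p, (f p.1 - f (mixp ({i}ᶜ) p.1 p.2)) ^ 2 ∂((Measure.pi ν).prod (Measure.pi ν)) := by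
  classical
  set π := Measure.pi ν
  have hvar : variance f π = Qf ν f Finset.univ - Qf ν f ∅ := by
    rw [variance_eq_sub hf2, Qf_univ ν hfm, Qf_empty]
    simp only [Pi.pow_apply]
    rfl
  set SS : ℕ → Finset (Fin n) := fun k => Finset.filter (fun j : Fin n => (j : ℕ) < k)
    Finset.univ with hSS
  have hSS0 : SS 0 = ∅ := by ext j; simp [hSS]
  have hSSn : SS n = Finset.univ := by ext j; simp [hSS, j.isLt]
  have htel : Qf ν f Finset.univ - Qf ν f ∅
      = ∑ k ∈ Finset.range n, (Qf ν f (SS (k+1)) - Qf ν f (SS k)) := by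
    rw [Finset.sum_range_sub (fun k => Qf ν f (SS k)) n, hSS0, hSSn]
  have hfin : ∑ k ∈ Finset.range n, (Qf ν f (SS (k+1)) - Qf ν f (SS k))
      = ∑ i : Fin n, (Qf ν f (SS ((i : ℕ)+1)) - Qf ν f (SS (i : ℕ))) :=
    (Fin.sum_univ_eq_sum_range (fun k => Qf ν f (SS (k+1)) - Qf ν f (SS k)) n).symm
  have hstep : ∀ i : Fin n, Qf ν f (SS ((i : ℕ)+1)) - Qf ν f (SS (i : ℕ))
      ≤ (1/2) * ∫ p, (f p.1 - f (mixp ({i}ᶜ) p.1 p.2)) ^ 2 ∂(π.prod π) := by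
    intro i
    have hCT : ({i}ᶜ : Finset (Fin n)) ∩ SS ((i : ℕ)+1) = SS (i : ℕ) := by
      ext j
      simp only [Finset.mem_inter, Finset.mem_compl, Finset.mem_singleton, Finset.mem_filter,
        Finset.mem_univ, true_and, hSS, Fin.ext_iff]
      omega
    have hk := key_step ν (SS ((i : ℕ)+1)) ({i}ᶜ) hfm hf2
    rw [hCT] at hk
    have hr := rterm_eq ν ({i}ᶜ) hfm hf2
    rw [hr]
    linarith
  calc variance f π = ∑ i : Fin n, (Qf ν f (SS ((i : ℕ)+1)) - Qf ν f (SS (i : ℕ))) := by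
        rw [hvar, htel, hfin]
    _ ≤ ∑ i : Fin n, (1/2) * ∫ p, (f p.1 - f (mixp ({i}ᶜ) p.1 p.2)) ^ 2 ∂(π.prod π) :=
        Finset.sum_le_sum fun i _ => hstep i
    _ = (1/2) * ∑ i : Fin n, ∫ p, (f p.1 - f (mixp ({i}ᶜ) p.1 p.2)) ^ 2 ∂(π.prod π) := by
        rw [Finset.mul_sum]

end QLayer

section Transfer

lemma map_pi_of_iIndep {Ω' : Type*} [MeasurableSpace Ω'] (μ' : Measure Ω')
    {ι : Type*} [Fintype ι] (Y : ι → Ω' → ℝ) (hY : ∀ i, Measurable (Y i))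
    (h : iIndepFun Y μ') [IsProbabilityMeasure μ'] :
    Measure.map (fun ω i => Y i ω) μ' = Measure.pi (fun i => Measure.map (Y i) μ') := by
  haveI : ∀ i, IsProbabilityMeasure (Measure.map (Y i) μ') := fun i =>
    Measure.isProbabilityMeasure_map (hY i).aemeasurable
  refine (Measure.pi_eq fun s hs => ?_).symm
  rw [Measure.map_apply (measurable_pi_lambda _ hY) (MeasurableSet.univ_pi hs)]
  have hpre : (fun ω i => Y i ω) ⁻¹' (Set.pi Set.univ s) = ⋂ i ∈ Finset.univ, Y i ⁻¹' s i := by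
    ext ω; simp [Set.mem_pi]
  rw [hpre, h.measure_inter_preimage_eq_mul Finset.univ (fun i _ => hs i)]
  refine Finset.prod_congr rfl fun i _ => ?_
  rw [Measure.map_apply (hY i) (hs i)]

end Transfer

end EfronSteinAux


open EfronSteinAux in
/-- the Efron–Stein inequality. -/
theorem stmt_9 {Ω : Type*} [MeasurableSpace Ω] (μ : Measure Ω) [IsProbabilityMeasure μ]
    (n : ℕ) (X X' : Fin n → Ω → ℝ)
    (hmeas : ∀ i, Measurable (X i)) (hmeas' : ∀ i, Measurable (X' i))
    (hindep : iIndepFun (Sum.elim X X') μ)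
    (hident : ∀ i, IdentDistrib (X i) (X' i) μ μ)
    (f : (Fin n → ℝ) → ℝ) (hf : Measurable f)
    (hL2 : MemLp (fun ω => f (fun j => X j ω)) 2 μ) :
    variance (fun ω => f (fun j => X j ω)) μ ≤
      (1/2) * ∑ i, μ[fun ω =>
        (f (fun j => X j ω) - f (Function.update (fun j => X j ω) i (X' i ω))) ^ 2] := by
  classical
  set ν : Fin n → Measure ℝ := fun i => Measure.map (X i) μ with hν
  haveI : ∀ i, IsProbabilityMeasure (ν i) := fun i =>
    Measure.isProbabilityMeasure_map (hmeas i).aemeasurable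
  set π := Measure.pi ν with hπ
  have hYm : ∀ i : Fin n ⊕ Fin n, Measurable (Sum.elim X X' i) := by
    rintro (j | j)
    · exact hmeas j
    · exact hmeas' j
  have helim : (fun i => Measure.map (Sum.elim X X' i) μ) = Sum.elim ν ν := by
    funext i
    rcases i with j | j
    · rfl
    · exact ((hident j).map_eq).symm
  have hbig : Measure.map (fun ω i => Sum.elim X X' i ω) μ = Measure.pi (Sum.elim ν ν) := by
    rw [map_pi_of_iIndep μ _ hYm hindep, helim]
  set M : Ω → (Fin n → ℝ) × (Fin n → ℝ) :=
    fun ω => ((fun j => X j ω), (fun j => X' j ω)) with hMdef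
  have hbigm : Measurable (fun ω i => Sum.elim X X' i ω) := measurable_pi_lambda _ hYm
  have hMeq : M = (esum (n := n)) ∘ (fun ω i => Sum.elim X X' i ω) := rfl
  have hMmeas : Measurable M := by
    rw [hMeq]; exact (esum (n := n)).measurable.comp hbigm
  have hM : Measure.map M μ = π.prod π := by
    rw [hMeq, ← Measure.map_map (esum (n := n)).measurable hbigm, hbig,
      (esum_pres ν).map_eq]
  have hXm : Measurable (fun ω (j : Fin n) => X j ω) := measurable_pi_lambda _ hmeas
  have hXvec : Measure.map (fun ω (j : Fin n) => X j ω) μ = π := by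
    have h1 : (fun ω (j : Fin n) => X j ω) = Prod.fst ∘ M := rfl
    rw [h1, ← Measure.map_map measurable_fst hMmeas, hM, Measure.map_fst_prod]
    simp
  have hf2π : MemLp f 2 π := by
    rw [← hXvec]
    exact (memLp_map_measure_iff hf.aestronglyMeasurable hXm.aemeasurable).2 hL2
  have hid : IdentDistrib (fun ω => f (fun j => X j ω)) f μ π :=
    ⟨(hf.comp hXm).aemeasurable, hf.aemeasurable, by
      rw [← hXvec]; exact (Measure.map_map hf hXm).symm⟩
  have hvar : variance (fun ω => f (fun j => X j ω)) μ = variance f π := hid.variance_eq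
  have hterm : ∀ i : Fin n, μ[fun ω =>
      (f (fun j => X j ω) - f (Function.update (fun j => X j ω) i (X' i ω))) ^ 2]
      = ∫ p, (f p.1 - f (mixp ({i}ᶜ) p.1 p.2)) ^ 2 ∂(π.prod π) := by
    intro i
    have hFm : Measurable (fun p : (Fin n → ℝ) × (Fin n → ℝ) =>
        (f p.1 - f (mixp ({i}ᶜ) p.1 p.2)) ^ 2) :=
      (((hf.comp measurable_fst).sub (hf.comp (measurable_mixp _))).pow_const 2)
    have hint : (fun ω =>
        (f (fun j => X j ω) - f (Function.update (fun j => X j ω) i (X' i ω))) ^ 2)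
        = (fun p : (Fin n → ℝ) × (Fin n → ℝ) =>
            (f p.1 - f (mixp ({i}ᶜ) p.1 p.2)) ^ 2) ∘ M := by
      funext ω
      have hupd : Function.update (fun j => X j ω) i (X' i ω)
          = mixp ({i}ᶜ) (fun j => X j ω) (fun j => X' j ω) := by
        funext j
        rw [Function.update_apply]
        by_cases h : j = i
        · subst h; simp [mixp]
        · simp [mixp, h]
      simp only [Function.comp_apply, hMdef, hupd]
    rw [hint, ← hM, integral_map hMmeas.aemeasurable hFm.aestronglyMeasurable]
    rfl
  rw [hvar]
  calc variance f π ≤ (1/2) * ∑ i : Fin n,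
        ∫ p, (f p.1 - f (mixp ({i}ᶜ) p.1 p.2)) ^ 2 ∂(π.prod π) := core_ineq ν hf hf2π
    _ = (1/2) * ∑ i, μ[fun ω =>
        (f (fun j => X j ω) - f (Function.update (fun j => X j ω) i (X' i ω))) ^ 2] := by
        rw [Finset.sum_congr rfl fun i _ => (hterm i).symm]
end
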